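/- Let k, c, ε > 0 be constants and let p = (1+ε)/d. Then whp every subset X ⊆ V(Q^d) of size |X| ≥ c·n·d^{−k} has edge boundary in Q^d_p satisfying |∂_{e,p}(X)| ≤ |X|·log d. -/

import Mathlib

open MeasureTheory Filter

noncomputable section

/-- The `d`-dimensional hypercube graph `Q^d`, on vertex set `{0,1}^d`. -/
def cubeGraph (d : ℕ) : SimpleGraph (Fin d → Bool) where
  Adj x y := hammingDist x y = 1
  symm := ⟨fun x y h => (hammingDist_comm y x).trans h⟩
  loopless := ⟨fun x (h : hammingDist x x = 1) => by rw [hammingDist_self] at h; exact absurd h (by norm_num)⟩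

/-- The spanning subgraph of `G` consisting of those edges `e` with `ω e = true`. -/
def percolate {V : Type*} (G : SimpleGraph V) (ω : Sym2 V → Bool) : SimpleGraph V where
  Adj x y := G.Adj x y ∧ ω s(x, y) = true
  symm := ⟨by
    rintro x y ⟨h1, h2⟩
    exact ⟨h1.symm, by rwa [Sym2.eq_swap]⟩⟩
  loopless := ⟨fun x h => G.loopless.1 x h.1⟩

/-- The Bernoulli measure on `Bool` with success probability `p` (truncated to `[0,1]`). -/
def bernoulliBool (p : ℝ) : Measure Bool :=
  (PMF.bernoulli (min (Real.toNNReal p) 1) (min_le_right _ _)).toMeasure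

instance (p : ℝ) : IsProbabilityMeasure (bernoulliBool p) := by
  unfold bernoulliBool; infer_instance

/-- The probability measure on edge-configurations of the `d`-dimensional hypercube in which
each potential edge is retained independently with probability `p`; the configuration space
is `Sym2 (Fin d → Bool) → Bool`, and `Q^d_p` is `percolate (cubeGraph d) ω`. -/
def cubeMeasure (d : ℕ) (p : ℝ) : Measure (Sym2 (Fin d → Bool) → Bool) :=
  Measure.pi fun _ => bernoulliBool p

/-- `C` is a largest connected component of `H`. -/
def IsLargestComponent {V : Type*} [Fintype V] (H : SimpleGraph V)
    (C : H.ConnectedComponent) : Prop :=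
  ∀ C' : H.ConnectedComponent, C'.supp.ncard ≤ C.supp.ncard

/-- The edge boundary of the vertex set `S` in the graph `H`: the set of edges of `H` with
exactly one endpoint in `S`. -/
def edgeBoundary {V : Type*} (H : SimpleGraph V) (S : Set V) : Set (Sym2 V) :=
  {e | e ∈ H.edgeSet ∧ ∃ x y, e = s(x, y) ∧ x ∈ S ∧ y ∉ S}

/-- The vertex boundary of the vertex set `S` in the graph `H`: the set of vertices outside
`S` having a neighbour in `S`. -/
def vertexBoundary {V : Type*} (H : SimpleGraph V) (S : Set V) : Set V :=
  {v | v ∉ S ∧ ∃ u ∈ S, H.Adj u v}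

/-- The survival probability of a Galton–Watson branching process with Poisson(`c`) offspring
distribution: one minus the extinction probability, the extinction probability being the least
fixed point in `[0,1]` of the probability generating function `s ↦ exp (c * (s - 1))` of the
Poisson(`c`) distribution. -/
def poissonSurvival (c : ℝ) : ℝ :=
  1 - sInf {s : ℝ | s ∈ Set.Icc (0 : ℝ) 1 ∧ Real.exp (c * (s - 1)) = s}

/-- `H` contains a complete minor of order `t`: there are `t` pairwise disjoint connected
branch sets with an edge of `H` between any two of them. -/
def HasCompleteMinor {V : Type*} (H : SimpleGraph V) (t : ℕ) : Prop :=
  ∃ B : Fin t → Set V,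
    (∀ i, (H.induce (B i)).Connected) ∧
    (Pairwise fun i j => Disjoint (B i) (B j)) ∧
    (∀ i j, i ≠ j → ∃ x ∈ B i, ∃ y ∈ B j, H.Adj x y)

/-!
First moment method. If a set `X` of `m ≥ c n d^(-k)` vertices has more than `m log d` edges of
`Q^d_p` on its boundary, then some `t = ⌊m log d⌋ + 1` of its at most `d m` boundary edges in
`Q^d` are all retained, an event of probability at most `C(dm, t) p^t ≤ (e d m p / t)^t ≤ r^m`,
where `r = (e (1 + ε) / log d)^(log d)`. There are at most `C(n, m) ≤ (e n / m)^m` such sets, so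
the failure probability is bounded by a geometric series with ratio `γ = e d^k r / c`, and
`γ = exp (log d · (k + O(1) - log log d)) → 0`.
-/

open Finset Real Topology

open Nat in
theorem Nat.choose_le_exp_mul_div_pow (n t : ℕ) (ht : 0 < t) :
    (n.choose t : ℝ) ≤ (exp 1 * n / t) ^ t := by
  have htt : (t : ℝ) ^ t ≤ exp t * t ! := by
    have := Real.pow_div_factorial_le_exp (x := t) (Nat.cast_nonneg t) t
    rwa [div_le_iff₀ (by positivity)] at this
  calc (n.choose t : ℝ) ≤ (n : ℝ) ^ t / t ! := Nat.choose_le_pow_div t n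
    _ ≤ exp t * n ^ t / t ^ t := by
      rw [div_le_div_iff₀ (by positivity) (by positivity)]
      calc (n : ℝ) ^ t * t ^ t ≤ n ^ t * (exp t * t !) := by gcongr
        _ = exp t * n ^ t * t ! := by ring
    _ = (exp 1 * n / t) ^ t := by rw [div_pow, mul_pow, exp_one_pow]

theorem Nat.choose_mul_pow_le_of_le (n m : ℕ) {r m₀ : ℝ} (hr : 0 ≤ r) (hm₀ : 0 < m₀)
    (hm : m₀ ≤ m) : (n.choose m : ℝ) * r ^ m ≤ (exp 1 * n * r / m₀) ^ m := by
  have hm0 : 0 < m := by exact_mod_cast hm₀.trans_le hm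
  calc (n.choose m : ℝ) * r ^ m ≤ (exp 1 * n / m) ^ m * r ^ m := by
        gcongr; exact n.choose_le_exp_mul_div_pow m hm0
    _ = (exp 1 * n * r / m) ^ m := by rw [← mul_pow]; ring
    _ ≤ (exp 1 * n * r / m₀) ^ m := by gcongr

theorem pow_le_two_mul_mul_half_pow {γ : ℝ} (hγ₀ : 0 ≤ γ) (hγ : γ ≤ 1 / 2) {m : ℕ} (hm : 0 < m) :
    γ ^ m ≤ 2 * γ * (1 / 2) ^ m := by
  obtain ⟨m, rfl⟩ := Nat.exists_eq_add_one_of_ne_zero hm.ne'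
  calc γ ^ (m + 1) = γ * γ ^ m := by ring
    _ ≤ γ * (1 / 2) ^ m := by gcongr
    _ = 2 * γ * (1 / 2) ^ (m + 1) := by ring

theorem Finset.sum_powerset_filter_pow_card_le {α : Type*} (s : Finset α) {r m₀ : ℝ} (hr : 0 ≤ r)
    (hm₀ : 0 < m₀) (hγ : exp 1 * #s * r / m₀ ≤ 1 / 2) :
    ∑ F ∈ s.powerset with m₀ ≤ #F, r ^ #F ≤ 4 * (exp 1 * #s * r / m₀) := by
  set γ := exp 1 * #s * r / m₀
  have hγ₀ : 0 ≤ γ := by positivity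
  have hterm : ∀ m : ℕ, (#s).choose m • (if m₀ ≤ m then r ^ m else 0) ≤ 2 * γ * (1 / 2) ^ m := by
    intro m
    rw [nsmul_eq_mul]
    split_ifs with hm
    · have hm0 : 0 < m := by exact_mod_cast hm₀.trans_le hm
      exact (Nat.choose_mul_pow_le_of_le _ m hr hm₀ hm).trans
        (pow_le_two_mul_mul_half_pow hγ₀ hγ hm0)
    · rw [mul_zero]; positivity
  calc ∑ F ∈ s.powerset with m₀ ≤ #F, r ^ #F
      = ∑ m ∈ range (#s + 1), (#s).choose m • (if m₀ ≤ m then r ^ m else 0) := by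
        rw [sum_filter, sum_powerset_apply_card (fun m : ℕ => if m₀ ≤ m then r ^ m else 0)]
    _ ≤ ∑ m ∈ range (#s + 1), 2 * γ * (1 / 2) ^ m := sum_le_sum fun m _ => hterm m
    _ ≤ 2 * γ * 2 := by rw [← mul_sum]; gcongr; exact sum_geometric_two_le _
    _ = 4 * γ := by ring

lemma edgeBoundary_percolate {V : Type*} (G : SimpleGraph V) (ω : Sym2 V → Bool) (S : Set V) :
    edgeBoundary (percolate G ω) S = {e ∈ edgeBoundary G S | ω e = true} := by
  ext e
  constructor
  · rintro ⟨he, x, y, rfl, hx, hy⟩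
    exact ⟨⟨he.1, x, y, rfl, hx, hy⟩, he.2⟩
  · rintro ⟨⟨he, x, y, rfl, hx, hy⟩, hω⟩
    exact ⟨⟨he, hω⟩, x, y, rfl, hx, hy⟩

lemma ncard_edgeBoundary_le {V : Type*} [Finite V] (G : SimpleGraph V) {D : ℕ}
    (hD : ∀ x, (G.neighborSet x).ncard ≤ D) (s : Finset V) :
    (edgeBoundary G s).ncard ≤ D * #s := by
  classical
  have hsub : edgeBoundary G s ⊆ ⋃ x ∈ s, G.incidenceSet x := by
    rintro _ ⟨he, x, y, rfl, hx, -⟩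
    exact Set.mem_biUnion hx ⟨he, Sym2.mem_mk_left x y⟩
  calc (edgeBoundary G s).ncard ≤ (⋃ x ∈ s, G.incidenceSet x).ncard :=
        Set.ncard_le_ncard hsub (Set.toFinite _)
    _ ≤ ∑ x ∈ s, (G.incidenceSet x).ncard := s.set_ncard_biUnion_le _
    _ ≤ ∑ _x ∈ s, D := sum_le_sum fun x _ => by
        rw [← Nat.card_coe_set_eq, Nat.card_congr (G.incidenceSetEquivNeighborSet x),
          Nat.card_coe_set_eq]
        exact hD x
    _ = D * #s := by rw [sum_const, smul_eq_mul, mul_comm]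

lemma cubeGraph_neighborSet_subset (d : ℕ) (x : Fin d → Bool) :
    (cubeGraph d).neighborSet x ⊆ Set.range fun i => Function.update x i (!x i) := by
  intro y (hxy : hammingDist x y = 1)
  obtain ⟨i, hi⟩ := card_eq_one.mp hxy
  have hdiff : ∀ j, x j ≠ y j ↔ j = i := fun j => by
    simpa using congrArg (j ∈ ·) hi
  refine ⟨i, funext fun j => ?_⟩
  by_cases hj : j = i
  · subst hj
    have := (hdiff j).mpr rfl
    simp only [Function.update_self]
    cases hx : x j <;> cases hy : y j <;> simp_all
  · simp only [Function.update_of_ne hj]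
    exact not_not.mp (mt (hdiff j).mp hj)

lemma ncard_cubeGraph_neighborSet_le (d : ℕ) (x : Fin d → Bool) :
    ((cubeGraph d).neighborSet x).ncard ≤ d := by
  calc ((cubeGraph d).neighborSet x).ncard
      ≤ (Set.range fun i => Function.update x i (!x i)).ncard :=
        Set.ncard_le_ncard (cubeGraph_neighborSet_subset d x) (Set.toFinite _)
    _ ≤ Nat.card (Fin d) := by
        rw [← Set.image_univ]
        exact (Set.ncard_image_le (Set.toFinite _)).trans (Set.ncard_univ _).le
    _ = d := Nat.card_fin d

instance (d : ℕ) (p : ℝ) : IsProbabilityMeasure (cubeMeasure d p) := by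
  unfold cubeMeasure; infer_instance

lemma measure_pi_bernoulliBool_forall_true_le {ι : Type*} [Fintype ι] (p : ℝ) (T : Finset ι) :
    Measure.pi (fun _ : ι => bernoulliBool p) {ω | ∀ e ∈ T, ω e = true} ≤
      ENNReal.ofReal p ^ #T := by
  classical
  have hset : {ω : ι → Bool | ∀ e ∈ T, ω e = true} =
      Set.univ.pi fun e => if e ∈ T then {true} else Set.univ := by
    ext ω
    simp only [Set.mem_ofPred_eq, Set.mem_pi, Set.mem_univ, forall_const]
    refine forall_congr' fun e => ?_
    split_ifs <;> simp [*]
  have htrue : bernoulliBool p {true} = (min p.toNNReal 1 : NNReal) := by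
    rw [bernoulliBool, PMF.toMeasure_apply_singleton _ _ (measurableSet_singleton _)]
    rfl
  rw [hset, Measure.pi_pi]
  calc ∏ e, bernoulliBool p (if e ∈ T then {true} else Set.univ)
      = ∏ e, if e ∈ T then ((min p.toNNReal 1 : NNReal) : ENNReal) else 1 :=
        prod_congr rfl fun e _ => by split_ifs; exacts [htrue, measure_univ]
    _ = ((min p.toNNReal 1 : NNReal) : ENNReal) ^ #T := by
        rw [prod_ite_mem, univ_inter, prod_const]
    _ ≤ ENNReal.ofReal p ^ #T := by
        gcongr
        exact ENNReal.coe_le_coe.mpr (min_le_left _ _)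

lemma measure_pi_bernoulliBool_le_card_filter_true {ι : Type*} [Fintype ι] (p : ℝ)
    (B : Finset ι) (t : ℕ) :
    Measure.pi (fun _ : ι => bernoulliBool p) {ω | t ≤ #{e ∈ B | ω e = true}} ≤
      (#B).choose t * ENNReal.ofReal p ^ t := by
  have hsub : {ω : ι → Bool | t ≤ #{e ∈ B | ω e = true}} ⊆
      ⋃ T ∈ B.powersetCard t, {ω | ∀ e ∈ T, ω e = true} := by
    intro ω hω
    obtain ⟨T, hT, rfl⟩ := exists_subset_card_eq hω
    exact Set.mem_biUnion (mem_powersetCard.mpr ⟨hT.trans (filter_subset _ _), rfl⟩)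
      fun e he => (mem_filter.mp (hT he)).2
  calc _ ≤ ∑ T ∈ B.powersetCard t,
          Measure.pi (fun _ : ι => bernoulliBool p) {ω | ∀ e ∈ T, ω e = true} :=
        (measure_mono hsub).trans (measure_biUnion_finset_le _ _)
    _ ≤ ∑ _T ∈ B.powersetCard t, ENNReal.ofReal p ^ t := sum_le_sum fun T hT => by
        simpa only [(mem_powersetCard.mp hT).2] using measure_pi_bernoulliBool_forall_true_le p T
    _ = (#B).choose t * ENNReal.ofReal p ^ t := by
        rw [sum_const, card_powersetCard, nsmul_eq_mul]

lemma choose_mul_pow_le_rpow {N t m : ℕ} {p a L : ℝ} (hp : 0 ≤ p) (ha : 0 < a) (hL : 0 < L)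
    (hN : N * p ≤ a * m) (ht : m * L ≤ t) (ht₀ : 0 < t) (haL : exp 1 * a ≤ L) :
    (N.choose t : ℝ) * p ^ t ≤ ((exp 1 * a / L) ^ L) ^ m := by
  have htR : (0 : ℝ) < t := by exact_mod_cast ht₀
  have hq₀ : 0 < exp 1 * a / L := by positivity
  calc (N.choose t : ℝ) * p ^ t ≤ (exp 1 * N / t) ^ t * p ^ t := by
        gcongr; exact N.choose_le_exp_mul_div_pow t ht₀
    _ = (exp 1 * (N * p) / t) ^ t := by rw [← mul_pow]; ring
    _ ≤ (exp 1 * a / L) ^ t := by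
        refine pow_le_pow_left₀ (by positivity) ?_ t
        rw [div_le_div_iff₀ htR hL]
        calc exp 1 * (N * p) * L ≤ exp 1 * (a * m) * L := by gcongr
          _ = exp 1 * a * (m * L) := by ring
          _ ≤ exp 1 * a * t := by gcongr
    _ = (exp 1 * a / L) ^ (t : ℝ) := (rpow_natCast _ t).symm
    _ ≤ (exp 1 * a / L) ^ (m * L) :=
        rpow_le_rpow_of_exponent_ge hq₀ ((div_le_one hL).mpr haL) ht
    _ = ((exp 1 * a / L) ^ L) ^ m := by rw [mul_comm (m : ℝ), rpow_mul hq₀.le, rpow_natCast]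

lemma tendsto_rpow_mul_div_log_rpow_log (k a : ℝ) (ha : 0 < a) :
    Tendsto (fun x : ℝ => x ^ k * (a / log x) ^ log x) atTop (𝓝 0) := by
  have hexp : Tendsto (fun x : ℝ => log x * (k + log a - log (log x))) atTop atBot :=
    tendsto_log_atTop.atTop_mul_atBot₀ <| tendsto_atBot_add_const_left _ _ <|
      tendsto_neg_atTop_atBot.comp (tendsto_log_atTop.comp tendsto_log_atTop)
  refine (tendsto_exp_atBot.comp hexp).congr' ?_
  filter_upwards [eventually_gt_atTop 1] with x hx
  have hlog : 0 < log x := log_pos hx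
  rw [Function.comp_apply, rpow_def_of_pos (by linarith), rpow_def_of_pos (by positivity),
    log_div ha.ne' hlog.ne', ← exp_add]
  ring_nf

lemma cubeMeasure_card_edgeBoundary_gt_le {d : ℕ} {ε : ℝ} (hε : 0 < ε)
    (hL : exp 1 * (1 + ε) ≤ log d) (F : Finset (Fin d → Bool)) :
    cubeMeasure d ((1 + ε) / d)
        {ω | #F * log d < (edgeBoundary (percolate (cubeGraph d) ω) F).ncard} ≤
      ENNReal.ofReal (((exp 1 * (1 + ε) / log d) ^ log d) ^ #F) := by
  classical
  have hlog : 0 < log d := lt_of_lt_of_le (by positivity) hL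
  have hd : (d : ℝ) ≠ 0 := fun h => by simp [h] at hlog
  have hp : 0 ≤ (1 + ε) / d := by positivity
  set B := (edgeBoundary (cubeGraph d) F).toFinset
  set t := ⌊#F * log d⌋₊ + 1
  have ht : #F * log d ≤ t := by
    simp only [t]; push_cast; exact (Nat.lt_floor_add_one _).le
  have hB : #B * ((1 + ε) / d) ≤ (1 + ε) * #F := by
    have : (#B : ℝ) ≤ d * #F := by
      rw [← Set.ncard_eq_toFinset_card']
      exact_mod_cast ncard_edgeBoundary_le _ (ncard_cubeGraph_neighborSet_le d) F
    calc #B * ((1 + ε) / d) ≤ d * #F * ((1 + ε) / d) := by gcongr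
      _ = (1 + ε) * #F := by field_simp
  have hsub : {ω | #F * log d < (edgeBoundary (percolate (cubeGraph d) ω) F).ncard} ⊆
      {ω | t ≤ #{e ∈ B | ω e = true}} := by
    intro ω hω
    have hcard : (edgeBoundary (percolate (cubeGraph d) ω) F).ncard = #{e ∈ B | ω e = true} := by
      rw [edgeBoundary_percolate, ← Set.ncard_coe_finset]
      congr 1
      ext e
      simp [B]
    rw [Set.mem_ofPred_eq, hcard] at hω
    exact (Nat.floor_lt (by positivity)).mpr hω
  calc _ ≤ _ := measure_mono hsub
    _ ≤ (#B).choose t * ENNReal.ofReal ((1 + ε) / d) ^ t :=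
        measure_pi_bernoulliBool_le_card_filter_true _ B t
    _ = ENNReal.ofReal ((#B).choose t * ((1 + ε) / d) ^ t) := by
        rw [ENNReal.ofReal_mul (by positivity), ENNReal.ofReal_natCast, ENNReal.ofReal_pow hp]
    _ ≤ _ := ENNReal.ofReal_le_ofReal <| choose_mul_pow_le_rpow hp (by positivity) hlog hB ht
        (by positivity) hL

lemma cubeMeasure_exists_large_edgeBoundary_le {d : ℕ} {ε m₀ : ℝ} (hε : 0 < ε)
    (hL : exp 1 * (1 + ε) ≤ log d) (hm₀ : 0 < m₀)
    (hγ : exp 1 * 2 ^ d * (exp 1 * (1 + ε) / log d) ^ log d / m₀ ≤ 1 / 2) :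
    cubeMeasure d ((1 + ε) / d)
        {ω | ∃ X : Set (Fin d → Bool), m₀ ≤ X.ncard ∧
          X.ncard * log d < (edgeBoundary (percolate (cubeGraph d) ω) X).ncard} ≤
      ENNReal.ofReal (4 * (exp 1 * 2 ^ d * (exp 1 * (1 + ε) / log d) ^ log d / m₀)) := by
  classical
  set r := (exp 1 * (1 + ε) / log d) ^ log d
  have hr : 0 ≤ r := by positivity
  set S := {F ∈ (univ : Finset (Fin d → Bool)).powerset | m₀ ≤ #F}
  have hsub : {ω | ∃ X : Set (Fin d → Bool), m₀ ≤ X.ncard ∧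
        X.ncard * log d < (edgeBoundary (percolate (cubeGraph d) ω) X).ncard} ⊆
      ⋃ F ∈ S, {ω | #F * log d < (edgeBoundary (percolate (cubeGraph d) ω) F).ncard} := by
    rintro ω ⟨X, hX, hbad⟩
    rw [Set.ncard_eq_toFinset_card'] at hX hbad
    refine Set.mem_biUnion (x := X.toFinset) (by simpa [S] using hX) ?_
    simpa using hbad
  have hcard : ((#(univ : Finset (Fin d → Bool)) : ℕ) : ℝ) = 2 ^ d := by simp
  calc _ ≤ ∑ F ∈ S, cubeMeasure d
          ((1 + ε) / d) {ω | #F * log d < (edgeBoundary (percolate (cubeGraph d) ω) F).ncard} :=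
        (measure_mono hsub).trans (measure_biUnion_finset_le _ _)
    _ ≤ ∑ F ∈ S, ENNReal.ofReal (r ^ #F) :=
        sum_le_sum fun F _ => cubeMeasure_card_edgeBoundary_gt_le hε hL F
    _ = ENNReal.ofReal (∑ F ∈ S, r ^ #F) :=
        (ENNReal.ofReal_sum_of_nonneg fun _ _ => by positivity).symm
    _ ≤ _ := by
        refine ENNReal.ofReal_le_ofReal ?_
        have := univ.sum_powerset_filter_pow_card_le hr hm₀ (by rwa [hcard])
        rwa [hcard] at this

lemma tendsto_measure_of_tendsto_measure_compl {ι : Type*} {l : Filter ι} {Ω : ι → Type*}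
    [∀ i, MeasurableSpace (Ω i)] {μ : ∀ i, Measure (Ω i)} [∀ i, IsProbabilityMeasure (μ i)]
    {A : ∀ i, Set (Ω i)} (hA : ∀ i, MeasurableSet (A i))
    (h : Tendsto (fun i => μ i (A i)ᶜ) l (𝓝 0)) : Tendsto (fun i => μ i (A i)) l (𝓝 1) := by
  have hsub := ENNReal.Tendsto.sub tendsto_const_nhds h (Or.inl ENNReal.one_ne_top)
  rw [tsub_zero] at hsub
  refine hsub.congr fun i => ?_
  rw [prob_compl_eq_one_sub (hA i), ENNReal.sub_sub_cancel ENNReal.one_ne_top prob_le_one]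

theorem edge_boundary_upper_general (k c ε : ℝ) (hc : 0 < c) (hε : 0 < ε) :
    Tendsto (fun d : ℕ =>
        cubeMeasure d ((1 + ε) / d)
          {ω | ∀ X : Set (Fin d → Bool),
            c * 2 ^ d * (d : ℝ) ^ (-k) ≤ (X.ncard : ℝ) →
            ((edgeBoundary (percolate (cubeGraph d) ω) X).ncard : ℝ) ≤
              (X.ncard : ℝ) * Real.log d})
      atTop (nhds 1) := by
  set γ : ℕ → ℝ := fun d =>
    exp 1 * 2 ^ d * (exp 1 * (1 + ε) / log d) ^ log d / (c * 2 ^ d * (d : ℝ) ^ (-k))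
  have hγ : Tendsto γ atTop (𝓝 0) := by
    have := ((tendsto_rpow_mul_div_log_rpow_log k (exp 1 * (1 + ε)) (by positivity)).comp
      tendsto_natCast_atTop_atTop).const_mul (exp 1 / c)
    rw [mul_zero] at this
    refine this.congr' ?_
    filter_upwards [eventually_gt_atTop 0] with d hd
    simp only [γ, Function.comp_apply, rpow_neg (Nat.cast_nonneg d)]
    field_simp
  have hlog : ∀ᶠ d : ℕ in atTop, exp 1 * (1 + ε) ≤ log d :=
    (tendsto_log_atTop.comp tendsto_natCast_atTop_atTop).eventually_ge_atTop _
  have hbad : ∀ᶠ d : ℕ in atTop, cubeMeasure d ((1 + ε) / d)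
      {ω | ∀ X : Set (Fin d → Bool), c * 2 ^ d * (d : ℝ) ^ (-k) ≤ (X.ncard : ℝ) →
        ((edgeBoundary (percolate (cubeGraph d) ω) X).ncard : ℝ) ≤ (X.ncard : ℝ) * log d}ᶜ ≤
      ENNReal.ofReal (4 * γ d) := by
    filter_upwards [hlog, hγ.eventually (eventually_le_nhds one_half_pos),
      eventually_gt_atTop 0] with d hL hγd hd
    refine (measure_mono fun ω hω => ?_).trans
      (cubeMeasure_exists_large_edgeBoundary_le hε hL (by positivity) hγd)
    simpa only [Set.mem_compl_iff, Set.mem_ofPred_eq, not_forall, not_le, exists_prop] using hω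
  refine tendsto_measure_of_tendsto_measure_compl (fun _ => (Set.to_countable _).measurableSet)
    (tendsto_of_tendsto_of_tendsto_of_le_of_le' tendsto_const_nhds ?_
      (Eventually.of_forall fun _ => zero_le) hbad)
  simpa using ENNReal.tendsto_ofReal (hγ.const_mul 4)

/-- whp every set of at least `c · n · d^(-k)` vertices has edge boundary in
`Q^d_p` of size at most `|X| log d`. -/
theorem edge_boundary_upper (k c ε : ℝ) (hk : 0 < k) (hc : 0 < c) (hε : 0 < ε) :
    Tendsto (fun d : ℕ =>
        cubeMeasure d ((1 + ε) / d)
          {ω | ∀ X : Set (Fin d → Bool),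
            c * 2 ^ d * (d : ℝ) ^ (-k) ≤ (X.ncard : ℝ) →
            ((edgeBoundary (percolate (cubeGraph d) ω) X).ncard : ℝ) ≤
              (X.ncard : ℝ) * Real.log d})
      atTop (nhds 1) :=
  edge_boundary_upper_general k c ε hc hε
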